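/- arXiv:1205.2761 — 5 statements merged into one kernel-verified Lean document; each statement's English description precedes it below -/
import Mathlib

section
/- Let m ≥ 1, let ε ≥ 0, and let ψ, φ ∈ ℂ^m ⊗ ℂ³ be unit vectors given in the decomposed form ψ = Σ_{i<m} α_i e_i ⊗ (Σ_{j<3} β_{i,j} f_j), φ = Σ_{i<m} α'_i e_i ⊗ (Σ_{j<3} β'_{i,j} f_j), with Σ_i |α_i|² = Σ_i |α'_i|² = 1 and Σ_j |β_{i,j}|² = Σ_j |β'_{i,j}|² = 1 for every i. If ½(1 + |⟨ψ, φ⟩|²) ≥ 1 − ε (i.e. the SWAP-test on ψ and φ succeeds with probability at least 1 − ε), then for every k < m and every ℓ < 3, | |α_k β_{k,ℓ}|² − |α'_k β'_{k,ℓ}|² | ≤ √(8ε). -/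
/-!
Let `a` and `b` be the unit vectors in `ℝ^(m×3)` with entries `|α_i β_{i,j}|` and
`|α'_i β'_{i,j}|`, and `S = ⟨a, b⟩`. By the triangle inequality `|⟨ψ, φ⟩| ≤ S`, so the SWAP-test
bound gives `1 - S² ≤ 2ε`. Since `‖a ∓ b‖² = 2 ∓ 2S`, each coordinate satisfies
`(a_k ∓ b_k)² ≤ 2 ∓ 2S`, and multiplying the two bounds gives
`(a_k² - b_k²)² ≤ 4 (1 - S²) ≤ 8ε`.
-/

open Finset ComplexConjugate

section UnitVectors

variable {ι : Type*} [Fintype ι]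

theorem sum_sub_sq_eq_and_sum_add_sq_eq {a b : ι → ℝ} (ha : ∑ i, a i ^ 2 = 1)
    (hb : ∑ i, b i ^ 2 = 1) :
    ∑ i, (a i - b i) ^ 2 = 2 - 2 * ∑ i, a i * b i ∧
      ∑ i, (a i + b i) ^ 2 = 2 + 2 * ∑ i, a i * b i := by
  simp only [sub_sq, add_sq, sum_add_distrib, sum_sub_distrib, mul_assoc, ← mul_sum, ha, hb]
  constructor <;> ring

theorem sq_sub_sq_sq_le_of_sum_sq_eq_one {a b : ι → ℝ} (ha : ∑ i, a i ^ 2 = 1)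
    (hb : ∑ i, b i ^ 2 = 1) (k : ι) :
    (a k ^ 2 - b k ^ 2) ^ 2 ≤ 4 * (1 - (∑ i, a i * b i) ^ 2) := by
  obtain ⟨hsub, hadd⟩ := sum_sub_sq_eq_and_sum_add_sq_eq ha hb
  have hsub_k : (a k - b k) ^ 2 ≤ 2 - 2 * ∑ i, a i * b i :=
    hsub ▸ single_le_sum (fun i _ => sq_nonneg (a i - b i)) (mem_univ k)
  have hadd_k : (a k + b k) ^ 2 ≤ 2 + 2 * ∑ i, a i * b i :=
    hadd ▸ single_le_sum (fun i _ => sq_nonneg (a i + b i)) (mem_univ k)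
  calc (a k ^ 2 - b k ^ 2) ^ 2 = (a k - b k) ^ 2 * (a k + b k) ^ 2 := by ring
    _ ≤ (2 - 2 * ∑ i, a i * b i) * (2 + 2 * ∑ i, a i * b i) :=
      mul_le_mul hsub_k hadd_k (sq_nonneg _) ((sq_nonneg _).trans hsub_k)
    _ = 4 * (1 - (∑ i, a i * b i) ^ 2) := by ring

theorem norm_sum_conj_mul_le (u v : ι → ℂ) :
    ‖∑ i, conj (u i) * v i‖ ≤ ∑ i, ‖u i‖ * ‖v i‖ :=
  (norm_sum_le _ _).trans_eq (by simp only [norm_mul, Complex.norm_conj])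

theorem sq_norm_sub_sq_norm_sq_le {u v : ι → ℂ} (hu : ∑ i, ‖u i‖ ^ 2 = 1)
    (hv : ∑ i, ‖v i‖ ^ 2 = 1) (k : ι) :
    (‖u k‖ ^ 2 - ‖v k‖ ^ 2) ^ 2 ≤ 4 * (1 - ‖∑ i, conj (u i) * v i‖ ^ 2) := by
  refine (sq_sub_sq_sq_le_of_sum_sq_eq_one hu hv k).trans ?_
  gcongr
  exact norm_sum_conj_mul_le u v

end UnitVectors

theorem sum_norm_mul_sq_eq {ι κ 𝕜 : Type*} [Fintype ι] [Fintype κ] [NormedDivisionRing 𝕜]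
    (α : ι → 𝕜) {β : ι → κ → 𝕜} (hβ : ∀ i, ∑ j, ‖β i j‖ ^ 2 = 1) :
    ∑ p : ι × κ, ‖α p.1 * β p.1 p.2‖ ^ 2 = ∑ i, ‖α i‖ ^ 2 := by
  simp only [Fintype.sum_prod_type, norm_mul, mul_pow, ← mul_sum, hβ, mul_one]

theorem swap_test_close_distributions_general (m : ℕ) (ε : ℝ)
    (α α' : Fin m → ℂ) (β β' : Fin m → Fin 3 → ℂ)
    (hα : ∑ i, ‖α i‖ ^ 2 = 1)
    (hα' : ∑ i, ‖α' i‖ ^ 2 = 1)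
    (hβ : ∀ i, ∑ j, ‖β i j‖ ^ 2 = 1)
    (hβ' : ∀ i, ∑ j, ‖β' i j‖ ^ 2 = 1)
    (hswap : (1 / 2 : ℝ) * (1 + ‖
        (∑ i, ∑ j, (starRingEnd ℂ) (α i * β i j) * (α' i * β' i j))‖ ^ 2)
      ≥ 1 - ε) :
    ∀ (k : Fin m) (ℓ : Fin 3),
      |‖α k * β k ℓ‖ ^ 2 - ‖α' k * β' k ℓ‖ ^ 2|
        ≤ Real.sqrt (8 * ε) := by
  intro k ℓ
  have hbound := sq_norm_sub_sq_norm_sq_le (u := fun p : Fin m × Fin 3 => α p.1 * β p.1 p.2)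
    (v := fun p => α' p.1 * β' p.1 p.2) ((sum_norm_mul_sq_eq α hβ).trans hα)
    ((sum_norm_mul_sq_eq α' hβ').trans hα') (k, ℓ)
  simp only [Fintype.sum_prod_type] at hbound
  exact Real.abs_le_sqrt (by linarith)

/-- **Lemma (SWAP-test closeness of outcome distributions).**
If the SWAP-test on the decomposed unit vectors
`ψ = Σ_i α_i e_i ⊗ (Σ_j β_{i,j} f_j)` and `φ = Σ_i α'_i e_i ⊗ (Σ_j β'_{i,j} f_j)`
succeeds with probability at least `1 − ε`, then for all `k, ℓ`,
`| |α_k β_{k,ℓ}|² − |α'_k β'_{k,ℓ}|² | ≤ √(8ε)`. -/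
theorem swap_test_close_distributions (m : ℕ) (hm : 1 ≤ m) (ε : ℝ) (hε : 0 ≤ ε)
    (α α' : Fin m → ℂ) (β β' : Fin m → Fin 3 → ℂ)
    (hα : ∑ i, ‖α i‖ ^ 2 = 1)
    (hα' : ∑ i, ‖α' i‖ ^ 2 = 1)
    (hβ : ∀ i, ∑ j, ‖β i j‖ ^ 2 = 1)
    (hβ' : ∀ i, ∑ j, ‖β' i j‖ ^ 2 = 1)
    (hswap : (1 / 2 : ℝ) * (1 + ‖
        (∑ i, ∑ j, (starRingEnd ℂ) (α i * β i j) * (α' i * β' i j))‖ ^ 2)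
      ≥ 1 - ε) :
    ∀ (k : Fin m) (ℓ : Fin 3),
      |‖α k * β k ℓ‖ ^ 2 - ‖α' k * β' k ℓ‖ ^ 2|
        ≤ Real.sqrt (8 * ε) :=
  swap_test_close_distributions_general m ε α α' β β' hα hα' hβ hβ' hswap
end

section
/- Let m ≥ 1 and set ε = 10⁻¹⁰ · m⁻². Let ψ, φ ∈ ℂ^m ⊗ ℂ³ be unit vectors in decomposed form with amplitudes (α_i, β_{i,j}) and (α'_i, β'_{i,j}) respectively. Suppose that the equality-test rejection probability R_eq = 1 − ½(1 + |⟨ψ, φ⟩|²) satisfies R_eq ≤ ε, and that the same-vertex rejection probability R_sv = Σ_{i<m} Σ_{j≠j', j,j'<3} |α_i|² |β_{i,j}|² |α'_i|² |β'_{i,j'}|² satisfies R_sv ≤ ε. Then for every i < m with |α_i|² ≥ 1/(100m) there exists j < 3 with |β_{i,j}|² ≥ 9/10. -/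
/-!
Put `x = Σ α_i β_{ij} e_i ⊗ f_j` and `y = Σ α'_i β'_{ij} e_i ⊗ f_j`. Since
`|⟨x, y⟩| ≤ Σ_k |x_k| |y_k|`, the vectors of moduli satisfy
`Σ_k (|x_k| - |y_k|)² ≤ 2 - 2 |⟨x, y⟩| ≤ 4ε`, with no phase alignment needed. Hence, with
`t = √ε = 1 / (10⁵ m)`, every weight `|α'_i β'_{ij}|²` is at least `|α_i β_{ij}|² - 4t`.
If a vertex `i` has weight `a = |α_i|² ≥ 1000 t` but every `|β_{ij}|² < 9/10`, then
`Σ_{j ≠ j'} |β_{ij}|² |β_{ij'}|² ≥ 1/10`, so the same-vertex rejection probability is at least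
`a² / 10 - 12 t a > t² = ε`.
-/

open Finset

section UnitVectors

variable {ι : Type*} [Fintype ι] {x y : ι → ℂ}

lemma sum_sq_norm_sub_norm_le (x y : ι → ℂ) :
    ∑ i, (‖x i‖ - ‖y i‖) ^ 2
      ≤ ∑ i, ‖x i‖ ^ 2 + ∑ i, ‖y i‖ ^ 2 - 2 * ‖∑ i, starRingEnd ℂ (x i) * y i‖ := by
  have hinner : ‖∑ i, starRingEnd ℂ (x i) * y i‖ ≤ ∑ i, ‖x i‖ * ‖y i‖ :=
    (norm_sum_le _ _).trans_eq (by simp)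
  have hexpand : ∑ i, (‖x i‖ - ‖y i‖) ^ 2
      = ∑ i, ‖x i‖ ^ 2 + ∑ i, ‖y i‖ ^ 2 - 2 * ∑ i, ‖x i‖ * ‖y i‖ := by
    simp only [sub_sq, sum_add_distrib, sum_sub_distrib, mul_sum, mul_assoc]
    ring
  linarith

lemma norm_le_one_of_sum_sq_norm_eq_one (hx : ∑ i, ‖x i‖ ^ 2 = 1) (k : ι) : ‖x k‖ ≤ 1 := by
  have : ‖x k‖ ^ 2 ≤ 1 := hx ▸ single_le_sum (fun i _ => sq_nonneg ‖x i‖) (mem_univ k)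
  nlinarith [norm_nonneg (x k)]

lemma two_sub_two_norm_inner_le (hx : ∑ i, ‖x i‖ ^ 2 = 1) (hy : ∑ i, ‖y i‖ ^ 2 = 1) {ε : ℝ}
    (h : 1 - 1 / 2 * (1 + ‖∑ i, starRingEnd ℂ (x i) * y i‖ ^ 2) ≤ ε) :
    2 - 2 * ‖∑ i, starRingEnd ℂ (x i) * y i‖ ≤ 4 * ε := by
  have hle : ‖∑ i, starRingEnd ℂ (x i) * y i‖ ≤ 1 := by
    have := sum_sq_norm_sub_norm_le x y
    rw [hx, hy] at this
    linarith [sum_nonneg fun i (_ : i ∈ univ) => sq_nonneg (‖x i‖ - ‖y i‖)]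
  nlinarith [norm_nonneg (∑ i, starRingEnd ℂ (x i) * y i)]

lemma sq_norm_sub_le_sq_norm (hx : ∑ i, ‖x i‖ ^ 2 = 1) (hy : ∑ i, ‖y i‖ ^ 2 = 1) {δ : ℝ}
    (hδ : 0 ≤ δ) (h : 2 - 2 * ‖∑ i, starRingEnd ℂ (x i) * y i‖ ≤ δ ^ 2) (k : ι) :
    ‖x k‖ ^ 2 - 2 * δ ≤ ‖y k‖ ^ 2 := by
  have hk : (‖x k‖ - ‖y k‖) ^ 2 ≤ δ ^ 2 := by
    have := sum_sq_norm_sub_norm_le x y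
    rw [hx, hy] at this
    have := single_le_sum (fun i (_ : i ∈ univ) => sq_nonneg (‖x i‖ - ‖y i‖)) (mem_univ k)
    linarith
  have hdiff : ‖x k‖ - ‖y k‖ ≤ δ := abs_le_of_sq_le_sq' hk hδ |>.2
  nlinarith [norm_le_one_of_sum_sq_norm_eq_one hx k, norm_le_one_of_sum_sq_norm_eq_one hy k,
    norm_nonneg (x k), norm_nonneg (y k)]

end UnitVectors

lemma sum_sq_norm_mul_eq_one {ι κ : Type*} [Fintype ι] [Fintype κ] {α : ι → ℂ} {β : ι → κ → ℂ}
    (hα : ∑ i, ‖α i‖ ^ 2 = 1) (hβ : ∀ i, ∑ j, ‖β i j‖ ^ 2 = 1) :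
    ∑ p : ι × κ, ‖α p.1 * β p.1 p.2‖ ^ 2 = 1 := by
  simp only [norm_mul, mul_pow, Fintype.sum_prod_type, ← mul_sum, hβ, mul_one, hα]

section OffDiagonal

variable {κ : Type*} [Fintype κ] [DecidableEq κ] {b : κ → ℝ}

lemma one_sub_le_sum_offDiag_mul (hb : ∀ j, 0 ≤ b j) (hsum : ∑ j, b j = 1) {c : ℝ}
    (hc : ∀ j, b j ≤ c) :
    1 - c ≤ ∑ j, ∑ j', if j = j' then 0 else b j * b j' := by
  have hsplit : ∑ j, ∑ j', (if j = j' then 0 else b j * b j')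
      = (∑ j, b j) ^ 2 - ∑ j, b j ^ 2 := by
    have hrow (j : κ) : ∑ j', (if j = j' then 0 else b j * b j')
        = ∑ j', b j * b j' - b j ^ 2 := by
      calc ∑ j', (if j = j' then 0 else b j * b j')
          = ∑ j', (b j * b j' - if j = j' then b j * b j' else 0) :=
            sum_congr rfl fun j' _ => by split_ifs <;> simp
        _ = ∑ j', b j * b j' - b j ^ 2 := by rw [sum_sub_distrib, sum_ite_eq]; simp [sq]
    simp only [hrow, sum_sub_distrib, sq, sum_mul_sum]
  have hsq : ∑ j, b j ^ 2 ≤ c := by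
    calc ∑ j, b j ^ 2 ≤ ∑ j, c * b j :=
          sum_le_sum fun j _ => by rw [sq]; exact mul_le_mul_of_nonneg_right (hc j) (hb j)
      _ = c := by rw [← mul_sum, hsum, mul_one]
  rw [hsplit, hsum]
  linarith

lemma sq_mul_sub_le_sum_offDiag {a s c : ℝ} {q : κ → ℝ} (ha : 0 ≤ a) (hs : 0 ≤ s)
    (hb : ∀ j, 0 ≤ b j) (hsum : ∑ j, b j = 1) (hc : ∀ j, b j ≤ c)
    (hq : ∀ j, a * b j - s ≤ q j) :
    a ^ 2 * (1 - c) - a * s * Fintype.card κ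
      ≤ ∑ j, ∑ j', if j = j' then 0 else a * b j * q j' := by
  have hterm (j j' : κ) : a ^ 2 * (if j = j' then 0 else b j * b j') - a * s * b j
      ≤ if j = j' then 0 else a * b j * q j' := by
    have hasb : 0 ≤ a * s * b j := mul_nonneg (mul_nonneg ha hs) (hb j)
    split_ifs
    · linarith
    · nlinarith [mul_le_mul_of_nonneg_left (hq j') (mul_nonneg ha (hb j))]
  calc a ^ 2 * (1 - c) - a * s * Fintype.card κ
      ≤ a ^ 2 * ∑ j, ∑ j', (if j = j' then 0 else b j * b j') - a * s * Fintype.card κ := by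
        gcongr
        exact one_sub_le_sum_offDiag_mul hb hsum hc
    _ = ∑ j, ∑ j', (a ^ 2 * (if j = j' then 0 else b j * b j') - a * s * b j) := by
        simp only [sum_sub_distrib, ← mul_sum, sum_const, card_univ, nsmul_eq_mul, hsum]
        ring
    _ ≤ _ := sum_le_sum fun j _ => sum_le_sum fun j' _ => hterm j j'

end OffDiagonal

theorem well_defined_colors_general (m : ℕ)
    (α α' : Fin m → ℂ) (β β' : Fin m → Fin 3 → ℂ)
    (hα : ∑ i, ‖α i‖ ^ 2 = 1)
    (hα' : ∑ i, ‖α' i‖ ^ 2 = 1)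
    (hβ : ∀ i, ∑ j, ‖β i j‖ ^ 2 = 1)
    (hβ' : ∀ i, ∑ j, ‖β' i j‖ ^ 2 = 1)
    (hReq : 1 - (1 / 2 : ℝ) * (1 + ‖
        (∑ i, ∑ j, (starRingEnd ℂ) (α i * β i j) * (α' i * β' i j))‖ ^ 2)
      ≤ 1 / (10 ^ 10 * (m : ℝ) ^ 2))
    (hRsv : ∑ i, ∑ j, ∑ j', (if j = j' then 0 else
        ‖α i‖ ^ 2 * ‖β i j‖ ^ 2 *
          ‖α' i‖ ^ 2 * ‖β' i j'‖ ^ 2)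
      ≤ 1 / (10 ^ 10 * (m : ℝ) ^ 2)) :
    ∀ i : Fin m, ‖α i‖ ^ 2 ≥ 1 / (100 * (m : ℝ)) →
      ∃ j : Fin 3, ‖β i j‖ ^ 2 ≥ 9 / 10 := by
  intro i₀ hi₀
  by_contra! hcolor
  have hm : (0 : ℝ) < m := by exact_mod_cast i₀.pos
  set t : ℝ := 1 / (10 ^ 5 * m) with ht_def
  have ht : 0 < t := by positivity
  have hε : 1 / (10 ^ 10 * (m : ℝ) ^ 2) = t ^ 2 := by rw [ht_def]; field_simp
  have hx := sum_sq_norm_mul_eq_one hα hβ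
  have hy := sum_sq_norm_mul_eq_one hα' hβ'
  have hclose : 2 - 2 * ‖∑ p : Fin m × Fin 3,
      starRingEnd ℂ (α p.1 * β p.1 p.2) * (α' p.1 * β' p.1 p.2)‖ ≤ (2 * t) ^ 2 := by
    have := two_sub_two_norm_inner_le hx hy (ε := t ^ 2)
      (by simpa only [Fintype.sum_prod_type, hε] using hReq)
    linarith
  have hq (j : Fin 3) : ‖α i₀‖ ^ 2 * ‖β i₀ j‖ ^ 2 - 4 * t ≤ ‖α' i₀‖ ^ 2 * ‖β' i₀ j‖ ^ 2 := by
    have := sq_norm_sub_le_sq_norm hx hy (by positivity) hclose (i₀, j)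
    simp only [norm_mul, mul_pow] at this
    linarith
  have hrow : ∑ j, ∑ j', (if j = j' then 0 else
      ‖α i₀‖ ^ 2 * ‖β i₀ j‖ ^ 2 * ‖α' i₀‖ ^ 2 * ‖β' i₀ j'‖ ^ 2) ≤ t ^ 2 := by
    refine hε ▸ (single_le_sum (fun i _ => ?_) (mem_univ i₀)).trans hRsv
    exact sum_nonneg fun j _ => sum_nonneg fun j' _ => by split_ifs <;> positivity
  have hlower := sq_mul_sub_le_sum_offDiag (sq_nonneg ‖α i₀‖) (by positivity : (0 : ℝ) ≤ 4 * t)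
    (fun j => sq_nonneg ‖β i₀ j‖) (hβ i₀) (fun j => (hcolor j).le) hq
  have ha : 1000 * t ≤ ‖α i₀‖ ^ 2 := by
    convert hi₀ using 1; rw [ht_def]; field_simp; ring
  simp only [Fintype.card_fin, mul_assoc] at hlower hrow
  -- `a² / 10 - 12 t a ≤ t²` is impossible once `a ≥ 1000 t > 0`
  nlinarith

/-- **Lemma (well-defined colors).**
Set `ε = 10⁻¹⁰ m⁻²`. If the equality-test rejection probability
`R_eq = 1 − ½(1 + |⟨ψ, φ⟩|²)` and the same-vertex rejection probability
`R_sv = Σ_i Σ_{j ≠ j'} |α_i|²|β_{i,j}|²|α'_i|²|β'_{i,j'}|²`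
are both at most `ε`, then every vertex `i` with `|α_i|² ≥ 1/(100m)` has a
well-defined color: some `j` with `|β_{i,j}|² ≥ 9/10`. -/
theorem well_defined_colors (m : ℕ) (hm : 1 ≤ m)
    (α α' : Fin m → ℂ) (β β' : Fin m → Fin 3 → ℂ)
    (hα : ∑ i, ‖α i‖ ^ 2 = 1)
    (hα' : ∑ i, ‖α' i‖ ^ 2 = 1)
    (hβ : ∀ i, ∑ j, ‖β i j‖ ^ 2 = 1)
    (hβ' : ∀ i, ∑ j, ‖β' i j‖ ^ 2 = 1)
    (hReq : 1 - (1 / 2 : ℝ) * (1 + ‖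
        (∑ i, ∑ j, (starRingEnd ℂ) (α i * β i j) * (α' i * β' i j))‖ ^ 2)
      ≤ 1 / (10 ^ 10 * (m : ℝ) ^ 2))
    (hRsv : ∑ i, ∑ j, ∑ j', (if j = j' then 0 else
        ‖α i‖ ^ 2 * ‖β i j‖ ^ 2 *
          ‖α' i‖ ^ 2 * ‖β' i j'‖ ^ 2)
      ≤ 1 / (10 ^ 10 * (m : ℝ) ^ 2)) :
    ∀ i : Fin m, ‖α i‖ ^ 2 ≥ 1 / (100 * (m : ℝ)) →
      ∃ j : Fin 3, ‖β i j‖ ^ 2 ≥ 9 / 10 :=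
  well_defined_colors_general m α α' β β' hα hα' hβ hβ' hReq hRsv
end

section
/- Let m ≥ 1 and set ε = 10⁻¹⁰ · m⁻². Let ψ, φ ∈ ℂ^m ⊗ ℂ³ be unit vectors in decomposed form with amplitudes (α_i, β_{i,j}) and (α'_i, β'_{i,j}) respectively, and let u₃ = (1/√3)(f₀ + f₁ + f₂) ∈ ℂ³. Suppose that R_eq = 1 − ½(1 + |⟨ψ, φ⟩|²) ≤ ε and R_sv = Σ_{i<m} Σ_{j≠j'} |α_i|² |β_{i,j}|² |α'_i|² |β'_{i,j'}|² ≤ ε. Then ‖(I_m ⊗ u₃u₃*) ψ‖² = Σ_{i<m} |α_i|² · (1/3) · |β_{i,0} + β_{i,1} + β_{i,2}|² ≥ 1/20, i.e. the probability of obtaining the uniform-projection outcome when measuring the color register of ψ is at least 0.05. -/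
/-!
Write `a i = ‖α i‖`, `a' i = ‖α' i‖` and let `s i = ∑ j, ‖β i j‖² ‖β' i j‖²` be the probability
that the colour measurements of `ψ` and `φ` at vertex `i` agree. Since `|⟨ψ, φ⟩| ≤ ∑ i, a i a' i`,
a small `R_eq` makes the unit vectors `a` and `a'` close: `∑ i, (a i - a' i)² ≤ 4ε`.
As `R_sv = ∑ i, a i² a' i² (1 - s i)`, the vertices with `s i < 99/100` carry
`∑ a i² a' i² ≤ 100ε`; there are at most `m` of them, so by Cauchy–Schwarz `∑ a i a' i ≤ 10⁻⁴`
over them, and closeness of `a` and `a'` bounds their `ψ`-mass `∑ a i²` by `1/100`.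
At every other vertex `s i`, an average of the `‖β i j‖²`, is at least `99/100`, so one colour
carries weight `≥ 99/100` and `‖β i 0 + β i 1 + β i 2‖² ≥ 7/10`. Hence the uniform outcome has
probability at least `(99/100) · (7/30) ≥ 1/20`.
-/

noncomputable def toEuc {ι : Type*} [Fintype ι] (f : ι → ℂ) : EuclideanSpace ℂ ι := WithLp.toLp 2 f

open Finset

section RealSums

variable {ι : Type*} [Fintype ι]

lemma sum_sub_sq_eq_two_sub_two_mul_sum {a b : ι → ℝ} (ha : ∑ i, a i ^ 2 = 1)
    (hb : ∑ i, b i ^ 2 = 1) : ∑ i, (a i - b i) ^ 2 = 2 - 2 * ∑ i, a i * b i := by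
  simp only [sub_sq, sum_add_distrib, sum_sub_distrib, ha, hb, mul_assoc, ← mul_sum]
  ring

lemma sum_mul_le_one {a b : ι → ℝ} (ha : ∑ i, a i ^ 2 = 1) (hb : ∑ i, b i ^ 2 = 1) :
    ∑ i, a i * b i ≤ 1 := by
  have := sum_sub_sq_eq_two_sub_two_mul_sum ha hb
  have : 0 ≤ ∑ i, (a i - b i) ^ 2 := sum_nonneg fun _ _ => sq_nonneg _
  linarith

lemma sum_sub_sq_le_of_sq_sum_mul_ge {a b : ι → ℝ} (ha : ∑ i, a i ^ 2 = 1)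
    (hb : ∑ i, b i ^ 2 = 1) {ε : ℝ} (hab : 0 ≤ ∑ i, a i * b i)
    (h : 1 - 2 * ε ≤ (∑ i, a i * b i) ^ 2) : ∑ i, (a i - b i) ^ 2 ≤ 4 * ε := by
  rw [sum_sub_sq_eq_two_sub_two_mul_sum ha hb]
  nlinarith [sum_mul_le_one ha hb]

lemma sum_le_of_card_mul_sum_sq_le (s : Finset ι) (f : ι → ℝ) {δ : ℝ} (hδ : 0 ≤ δ)
    (h : Fintype.card ι * ∑ i ∈ s, f i ^ 2 ≤ δ ^ 2) : ∑ i ∈ s, f i ≤ δ := by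
  refine le_of_sq_le_sq ?_ hδ
  calc (∑ i ∈ s, f i) ^ 2 ≤ #s * ∑ i ∈ s, f i ^ 2 := sq_sum_le_card_mul_sum_sq
    _ ≤ Fintype.card ι * ∑ i ∈ s, f i ^ 2 := by
      gcongr
      exact card_le_univ s
    _ ≤ δ ^ 2 := h

lemma sum_sq_le_sum_mul_add (s : Finset ι) {a b : ι → ℝ} (ha : ∑ i, a i ^ 2 = 1) {δ : ℝ}
    (hδ : 0 ≤ δ) (h : ∑ i, (a i - b i) ^ 2 ≤ δ ^ 2) :
    ∑ i ∈ s, a i ^ 2 ≤ ∑ i ∈ s, a i * b i + δ := by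
  have hcs : (∑ i ∈ s, a i * (a i - b i)) ^ 2 ≤ δ ^ 2 :=
    calc _ ≤ (∑ i ∈ s, a i ^ 2) * ∑ i ∈ s, (a i - b i) ^ 2 := sum_mul_sq_le_sq_mul_sq _ _ _
      _ ≤ 1 * δ ^ 2 := by
        gcongr
        · exact ha ▸ sum_le_univ_sum_of_nonneg fun _ => sq_nonneg _
        · exact (sum_le_univ_sum_of_nonneg fun _ => sq_nonneg _).trans h
      _ = δ ^ 2 := one_mul _
  have := le_of_sq_le_sq hcs hδ
  simp only [mul_sub, sum_sub_distrib, ← sq] at this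
  linarith

lemma mul_one_sub_le_sum_mul {w g : ι → ℝ} (hw : ∀ i, 0 ≤ w i) (hg : ∀ i, 0 ≤ g i)
    (hw1 : ∑ i, w i = 1) (s : Finset ι) {c δ : ℝ} (hc0 : 0 ≤ c) (hs : ∑ i ∈ s, w i ≤ δ)
    (hc : ∀ i ∉ s, c ≤ g i) : c * (1 - δ) ≤ ∑ i, w i * g i := by
  classical
  have hcompl : 1 - δ ≤ ∑ i ∈ sᶜ, w i := by
    linarith [sum_compl_add_sum s w]
  calc c * (1 - δ) ≤ ∑ i ∈ sᶜ, c * w i := by rw [← mul_sum]; gcongr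
    _ ≤ ∑ i ∈ sᶜ, w i * g i :=
      sum_le_sum fun i hi => by nlinarith [hw i, hc i (mem_compl.mp hi)]
    _ ≤ ∑ i, w i * g i := sum_le_univ_sum_of_nonneg fun i => mul_nonneg (hw i) (hg i)

end RealSums

section Amplitudes

open ComplexConjugate

variable {ι κ : Type*} [Fintype ι] [Fintype κ]

lemma norm_toEuc_sq (f : ι → ℂ) : ‖toEuc f‖ ^ 2 = ∑ i, ‖f i‖ ^ 2 :=
  EuclideanSpace.norm_sq_eq _

lemma norm_sq_uniformColorProjection (α : ι → ℂ) (β : ι → Fin 3 → ℂ) :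
    ‖toEuc (fun p : ι × Fin 3 => (1 / 3 : ℂ) * (α p.1 * (β p.1 0 + β p.1 1 + β p.1 2)))‖ ^ 2
      = ∑ i, ‖α i‖ ^ 2 * (1 / 3) * ‖β i 0 + β i 1 + β i 2‖ ^ 2 := by
  rw [norm_toEuc_sq, Fintype.sum_prod_type]
  refine sum_congr rfl fun i _ => ?_
  simp only [norm_mul, sum_const, card_univ, Fintype.card_fin]
  norm_num
  ring

lemma norm_sum_conj_mul_le_s4 (α α' : ι → ℂ) {β β' : ι → κ → ℂ}
    (hβ : ∀ i, ∑ j, ‖β i j‖ ^ 2 = 1) (hβ' : ∀ i, ∑ j, ‖β' i j‖ ^ 2 = 1) :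
    ‖∑ i, ∑ j, conj (α i * β i j) * (α' i * β' i j)‖ ≤ ∑ i, ‖α i‖ * ‖α' i‖ := by
  refine (norm_sum_le _ _).trans (sum_le_sum fun i _ => ?_)
  calc ‖∑ j, conj (α i * β i j) * (α' i * β' i j)‖
      ≤ ∑ j, ‖α i‖ * ‖α' i‖ * (‖β i j‖ * ‖β' i j‖) :=
        (norm_sum_le _ _).trans_eq <| sum_congr rfl fun j _ => by
          simp only [norm_mul, Complex.norm_conj]; ring
    _ = ‖α i‖ * ‖α' i‖ * ∑ j, ‖β i j‖ * ‖β' i j‖ := (mul_sum ..).symm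
    _ ≤ ‖α i‖ * ‖α' i‖ :=
        mul_le_of_le_one_right (by positivity) (sum_mul_le_one (hβ i) (hβ' i))

noncomputable def sameColorProb (b b' : κ → ℂ) : ℝ := ∑ j, ‖b j‖ ^ 2 * ‖b' j‖ ^ 2

lemma sum_sum_ite_eq_mul_sub [DecidableEq κ] (x y : κ → ℝ) :
    ∑ j, ∑ j', (if j = j' then 0 else x j * y j') =
      (∑ j, x j) * (∑ j, y j) - ∑ j, x j * y j := by
  have h : ∀ j j', (if j = j' then 0 else x j * y j') =
      x j * y j' - if j = j' then x j * y j' else 0 := by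
    intro j j'; split_ifs <;> simp
  simp only [h, sum_sub_distrib, sum_ite_eq, mem_univ, if_true, sum_mul_sum]

lemma sum_sum_ite_eq_mul_one_sub_sameColorProb [DecidableEq κ] (a a' : ℝ) {b b' : κ → ℂ}
    (hb : ∑ j, ‖b j‖ ^ 2 = 1) (hb' : ∑ j, ‖b' j‖ ^ 2 = 1) :
    ∑ j, ∑ j', (if j = j' then 0 else a * ‖b j‖ ^ 2 * a' * ‖b' j'‖ ^ 2) =
      a * a' * (1 - sameColorProb b b') := by
  have h := sum_sum_ite_eq_mul_sub (fun j => a * ‖b j‖ ^ 2) (fun j => a' * ‖b' j‖ ^ 2)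
  simp only [← mul_assoc, ← mul_sum, hb, hb'] at h
  rw [h, sameColorProb, mul_sub, mul_sum]
  simp only [mul_one]
  congr 1
  exact sum_congr rfl fun j _ => by ring

lemma exists_sameColorProb_le [Nonempty κ] (b : κ → ℂ) {b' : κ → ℂ}
    (hb' : ∑ j, ‖b' j‖ ^ 2 = 1) : ∃ j, sameColorProb b b' ≤ ‖b j‖ ^ 2 := by
  obtain ⟨j, -, hj⟩ := exists_max_image univ (fun j => ‖b j‖ ^ 2) univ_nonempty
  refine ⟨j, ?_⟩
  calc sameColorProb b b' ≤ ∑ k, ‖b j‖ ^ 2 * ‖b' k‖ ^ 2 :=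
        sum_le_sum fun k _ => mul_le_mul_of_nonneg_right (hj k (mem_univ k)) (by positivity)
    _ = ‖b j‖ ^ 2 := by rw [← mul_sum, hb', mul_one]

lemma le_norm_sum_sq_of_le_sq_norm {E : Type*} [SeminormedAddCommGroup E] {x : Fin 3 → E}
    (hx : ∑ j, ‖x j‖ ^ 2 = 1) (j : Fin 3) (hj : 99 / 100 ≤ ‖x j‖ ^ 2) :
    7 / 10 ≤ ‖∑ k, x k‖ ^ 2 := by
  have htri : ‖x j‖ ≤ ‖∑ k, x k‖ + ∑ k ∈ univ.erase j, ‖x k‖ := by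
    rw [← add_sum_erase univ x (mem_univ j)]
    calc ‖x j‖ ≤ ‖x j + ∑ k ∈ univ.erase j, x k‖ + ‖∑ k ∈ univ.erase j, x k‖ :=
          norm_le_add_norm_add _ _
      _ ≤ _ := by gcongr; exact norm_sum_le _ _
  have hrest : (∑ k ∈ univ.erase j, ‖x k‖) ^ 2 ≤ 2 * (1 - ‖x j‖ ^ 2) := by
    have hcs := sq_sum_le_card_mul_sum_sq (s := univ.erase j) (f := fun k => ‖x k‖)
    have hcard : ((univ.erase j).card : ℝ) = 2 := by simp
    have := add_sum_erase univ (fun k => ‖x k‖ ^ 2) (mem_univ j)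
    rw [hcard] at hcs
    linarith
  have hxj : 99 / 100 ≤ ‖x j‖ := by nlinarith [norm_nonneg (x j)]
  have hrest' : ∑ k ∈ univ.erase j, ‖x k‖ ≤ 1415 / 10000 := by
    nlinarith [sum_nonneg fun k (_ : k ∈ univ.erase j) => norm_nonneg (x k)]
  nlinarith [norm_nonneg (∑ k, x k)]

lemma le_norm_sum_sq_of_le_sameColorProb {b b' : Fin 3 → ℂ} (hb : ∑ j, ‖b j‖ ^ 2 = 1)
    (hb' : ∑ j, ‖b' j‖ ^ 2 = 1) (h : 99 / 100 ≤ sameColorProb b b') :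
    7 / 10 ≤ ‖∑ j, b j‖ ^ 2 := by
  obtain ⟨j, hj⟩ := exists_sameColorProb_le b hb'
  exact le_norm_sum_sq_of_le_sq_norm hb j (h.trans hj)

lemma sum_sq_mul_sq_le_of_sameColorProb_lt [DecidableEq κ] (α α' : ι → ℂ) {β β' : ι → κ → ℂ}
    (hβ : ∀ i, ∑ j, ‖β i j‖ ^ 2 = 1) (hβ' : ∀ i, ∑ j, ‖β' i j‖ ^ 2 = 1) :
    ∑ i ∈ univ.filter (fun i => sameColorProb (β i) (β' i) < 99 / 100), (‖α i‖ * ‖α' i‖) ^ 2 ≤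
      100 * ∑ i, ∑ j, ∑ j', (if j = j' then 0 else
        ‖α i‖ ^ 2 * ‖β i j‖ ^ 2 * ‖α' i‖ ^ 2 * ‖β' i j'‖ ^ 2) := by
  rw [mul_sum]
  refine (sum_le_sum fun i hi => ?_).trans (sum_le_univ_sum_of_nonneg fun i => ?_)
  · rw [sum_sum_ite_eq_mul_one_sub_sameColorProb _ _ (hβ i) (hβ' i)]
    have := (mem_filter.mp hi).2
    nlinarith [mul_nonneg (sq_nonneg ‖α i‖) (sq_nonneg ‖α' i‖)]
  · exact mul_nonneg (by norm_num) <| sum_nonneg fun j _ => sum_nonneg fun j' _ => by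
      split_ifs <;> positivity

end Amplitudes

/-- **Lemma (uniform color outcome is likely).**
Set `ε = 10⁻¹⁰ m⁻²`. If `R_eq ≤ ε` and `R_sv ≤ ε`, then the probability
`‖(I_m ⊗ u₃u₃*) ψ‖² = Σ_i |α_i|² (1/3) |β_{i,0} + β_{i,1} + β_{i,2}|²`
of obtaining the uniform-projection outcome on the color register of `ψ`
is at least `1/20`. Here `(I_m ⊗ u₃u₃*) ψ` has coordinates
`(i, j) ↦ (1/3) α_i (β_{i,0} + β_{i,1} + β_{i,2})`. -/
theorem uniform_color_outcome_likely (m : ℕ) (hm : 1 ≤ m)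
    (α α' : Fin m → ℂ) (β β' : Fin m → Fin 3 → ℂ)
    (hα : ∑ i, Norm.norm (α i) ^ 2 = 1)
    (hα' : ∑ i, Norm.norm (α' i) ^ 2 = 1)
    (hβ : ∀ i, ∑ j, Norm.norm (β i j) ^ 2 = 1)
    (hβ' : ∀ i, ∑ j, Norm.norm (β' i j) ^ 2 = 1)
    (hReq : 1 - (1 / 2 : ℝ) * (1 + Norm.norm
        (∑ i, ∑ j, (starRingEnd ℂ) (α i * β i j) * (α' i * β' i j)) ^ 2)
      ≤ 1 / (10 ^ 10 * (m : ℝ) ^ 2))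
    (hRsv : ∑ i, ∑ j, ∑ j', (if j = j' then 0 else
        Norm.norm (α i) ^ 2 * Norm.norm (β i j) ^ 2 *
          Norm.norm (α' i) ^ 2 * Norm.norm (β' i j') ^ 2)
      ≤ 1 / (10 ^ 10 * (m : ℝ) ^ 2)) :
    ‖toEuc (fun p : Fin m × Fin 3 =>
        (1 / 3 : ℂ) * (α p.1 * (β p.1 0 + β p.1 1 + β p.1 2)))‖ ^ 2
      = ∑ i, Norm.norm (α i) ^ 2 * (1 / 3) *
          Norm.norm (β i 0 + β i 1 + β i 2) ^ 2
    ∧ ∑ i, Norm.norm (α i) ^ 2 * (1 / 3) *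
          Norm.norm (β i 0 + β i 1 + β i 2) ^ 2 ≥ 1 / 20 := by
  refine ⟨norm_sq_uniformColorProjection α β, ?_⟩
  set ε := 1 / (10 ^ 10 * (m : ℝ) ^ 2)
  have hm' : (1 : ℝ) ≤ m := by exact_mod_cast hm
  have hmε : m * ε ≤ 1 / 10 ^ 10 :=
    calc m * ε ≤ m ^ 2 * ε := by gcongr; nlinarith
      _ = 1 / 10 ^ 10 := by simp only [ε]; field_simp
  have hε : ε ≤ 1 / 10 ^ 10 := by nlinarith
  have hclose : ∑ i, (‖α i‖ - ‖α' i‖) ^ 2 ≤ (2 / 10 ^ 5) ^ 2 := by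
    have hX := pow_le_pow_left₀ (norm_nonneg _) (norm_sum_conj_mul_le_s4 α α' hβ hβ') 2
    have := sum_sub_sq_le_of_sq_sum_mul_ge hα hα' (by positivity) (ε := ε) (by linarith)
    linarith
  set bad := univ.filter fun i => sameColorProb (β i) (β' i) < 99 / 100
  have hbadOverlap : ∑ i ∈ bad, ‖α i‖ * ‖α' i‖ ≤ 1 / 10 ^ 4 := by
    refine sum_le_of_card_mul_sum_sq_le bad _ (by norm_num) ?_
    have := sum_sq_mul_sq_le_of_sameColorProb_lt α α' hβ hβ'
    rw [Fintype.card_fin]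
    nlinarith
  have hbadMass : ∑ i ∈ bad, ‖α i‖ ^ 2 ≤ 1 / 100 := by
    linarith [sum_sq_le_sum_mul_add bad hα (by norm_num) hclose]
  have hgood : ∀ i ∉ bad, 7 / 30 ≤ 1 / 3 * ‖β i 0 + β i 1 + β i 2‖ ^ 2 := fun i hi => by
    rw [← Fin.sum_univ_three]
    have := le_norm_sum_sq_of_le_sameColorProb (hβ i) (hβ' i) (by simpa [bad] using hi)
    linarith
  have := mul_one_sub_le_sum_mul (fun i => sq_nonneg ‖α i‖) (fun i => by positivity) hα bad
    (by norm_num) hbadMass hgood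
  simp only [mul_assoc] at this ⊢
  linarith
end

section
/- Let m ≥ 1 and let ξ = Σ_{i<m} γ_i e_i ∈ ℂ^m be a unit vector. Let u_m = (1/√m) Σ_{i<m} e_i be the uniform superposition. If there exists k < m with |γ_k|² < 1/(2m), then 1 − |⟨u_m, ξ⟩|² ≥ 1/(16m²). In other words, measuring ξ with the two-outcome projective measurement {u_m u_m*, I − u_m u_m*} yields the second outcome with probability at least 1/(16m²). -/
/-!
`1 − |⟨u_m, ξ⟩|²` is the squared distance from `ξ` to the line `ℂ u_m`, i.e. the spread
`∑ |γ_i − μ|²` of the amplitudes around their mean `μ`. Since the `|γ_i|²` average `1/m`, some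
`|γ_j|² ≥ 1/m ≥ 2 |γ_k|²`, and the two amplitudes `γ_j`, `γ_k` alone contribute at least
`|γ_j − γ_k|² / 2 ≥ |γ_j|² / 32 ≥ 1/(32 m)`, which is at least `1/(16 m²)` because `j ≠ k`
forces `m ≥ 2`.
-/

open Finset

theorem sum_norm_sub_mean_sq {E ι : Type*} [NormedAddCommGroup E] [InnerProductSpace ℝ E]
    [Fintype ι] (x : ι → E) :
    ∑ i, ‖x i - (Fintype.card ι : ℝ)⁻¹ • ∑ j, x j‖ ^ 2
      = ∑ i, ‖x i‖ ^ 2 - ‖∑ i, x i‖ ^ 2 / Fintype.card ι := by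
  set n : ℝ := (Fintype.card ι : ℝ)
  simp_rw [norm_sub_sq_real, sum_add_distrib, sum_sub_distrib, ← mul_sum, ← sum_inner,
    sum_const, card_univ, nsmul_eq_mul, real_inner_smul_right, real_inner_self_eq_norm_sq,
    norm_smul, mul_pow, Real.norm_eq_abs, sq_abs]
  rcases eq_or_ne n 0 with hn | hn
  · simp [hn]
  · field_simp
    ring

theorem norm_sub_sq_le_two_mul_add {E : Type*} [SeminormedAddCommGroup E] (a b c : E) :
    ‖a - b‖ ^ 2 ≤ 2 * (‖a - c‖ ^ 2 + ‖b - c‖ ^ 2) := by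
  have h := norm_sub_le_norm_sub_add_norm_sub a c b
  rw [norm_sub_rev c b] at h
  nlinarith [sq_nonneg (‖a - c‖ - ‖b - c‖), norm_nonneg (a - b)]

theorem norm_sub_sq_le_two_mul_sum_norm_sq_sub {E ι : Type*} [NormedAddCommGroup E]
    [InnerProductSpace ℝ E] [Fintype ι] (x : ι → E) {i j : ι} (hij : i ≠ j) :
    ‖x i - x j‖ ^ 2 ≤ 2 * (∑ l, ‖x l‖ ^ 2 - ‖∑ l, x l‖ ^ 2 / Fintype.card ι) := by
  set μ := (Fintype.card ι : ℝ)⁻¹ • ∑ l, x l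
  calc ‖x i - x j‖ ^ 2 ≤ 2 * (‖x i - μ‖ ^ 2 + ‖x j - μ‖ ^ 2) := norm_sub_sq_le_two_mul_add _ _ _
    _ ≤ 2 * ∑ l, ‖x l - μ‖ ^ 2 := by
      gcongr
      exact add_le_sum (f := fun l ↦ ‖x l - μ‖ ^ 2) (fun _ _ ↦ sq_nonneg _) (mem_univ i)
        (mem_univ j) hij
    _ = _ := by rw [sum_norm_sub_mean_sq]

theorem norm_sq_div_sixteen_le_norm_sub_sq {E : Type*} [SeminormedAddCommGroup E] {a b : E}
    (h : 2 * ‖b‖ ^ 2 ≤ ‖a‖ ^ 2) : ‖a‖ ^ 2 / 16 ≤ ‖a - b‖ ^ 2 := by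
  have hba : 4 * ‖b‖ ≤ 3 * ‖a‖ := by
    nlinarith [norm_nonneg a, norm_nonneg b]
  calc ‖a‖ ^ 2 / 16 = (‖a‖ / 4) ^ 2 := by ring
    _ ≤ ‖a - b‖ ^ 2 := by
      gcongr
      linarith [norm_sub_norm_le a b]

theorem exists_inv_card_le_norm_sq {E ι : Type*} [SeminormedAddCommGroup E] [Fintype ι]
    [Nonempty ι] {x : ι → E} (hx : ∑ i, ‖x i‖ ^ 2 = 1) :
    ∃ j, (Fintype.card ι : ℝ)⁻¹ ≤ ‖x j‖ ^ 2 := by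
  obtain ⟨j, -, hj⟩ := exists_le_of_sum_le (s := univ) (f := fun _ ↦ (Fintype.card ι : ℝ)⁻¹)
    (g := fun i ↦ ‖x i‖ ^ 2) univ_nonempty (by simp [hx])
  exact ⟨j, hj⟩

theorem norm_inv_sqrt_mul_sq (m : ℕ) (z : ℂ) : ‖(Real.sqrt m : ℂ)⁻¹ * z‖ ^ 2 = ‖z‖ ^ 2 / m := by
  rw [norm_mul, norm_inv, Complex.norm_real, Real.norm_of_nonneg (Real.sqrt_nonneg _), mul_pow,
    inv_pow, Real.sq_sqrt m.cast_nonneg, inv_mul_eq_div]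

theorem far_from_uniform_general (m : ℕ) (γ : Fin m → ℂ)
    (hγ : ∑ i, ‖γ i‖ ^ 2 = 1)
    (hk : ∃ k : Fin m, ‖γ k‖ ^ 2 < 1 / (2 * (m : ℝ))) :
    1 - ‖((Real.sqrt m : ℂ))⁻¹ * ∑ i, γ i‖ ^ 2
      ≥ 1 / (16 * (m : ℝ) ^ 2) := by
  obtain ⟨k, hk⟩ := hk
  have : Nonempty (Fin m) := ⟨k⟩
  obtain ⟨j, hj⟩ := exists_inv_card_le_norm_sq hγ
  rw [Fintype.card_fin] at hj
  have hm : (0 : ℝ) < m := by exact_mod_cast k.pos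
  have hkj : 2 * ‖γ k‖ ^ 2 ≤ ‖γ j‖ ^ 2 := by
    rw [lt_div_iff₀ (by positivity)] at hk
    rw [inv_le_iff_one_le_mul₀ hm] at hj
    nlinarith
  have hjk : j ≠ k := fun h ↦ by subst h; nlinarith [inv_pos.2 hm]
  have hm2 : (2 : ℝ) ≤ m := by
    exact_mod_cast Fintype.card_fin m ▸ Fintype.one_lt_card_iff.mpr ⟨j, k, hjk⟩
  have spread := norm_sub_sq_le_two_mul_sum_norm_sq_sub γ hjk
  have gap := norm_sq_div_sixteen_le_norm_sub_sq hkj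
  rw [Fintype.card_fin, hγ] at spread
  rw [norm_inv_sqrt_mul_sq, ge_iff_le]
  calc 1 / (16 * (m : ℝ) ^ 2) ≤ (m : ℝ)⁻¹ / 32 := by
        rw [div_le_div_iff₀ (by positivity) (by norm_num), inv_mul_eq_div, le_div_iff₀ hm]
        nlinarith
    _ ≤ _ := by linarith

/-- **Lemma 2.8 of Blier–Tapp.**
Let `ξ = Σ_i γ_i e_i ∈ ℂ^m` be a unit vector and `u_m` the uniform
superposition, so that `⟨u_m, ξ⟩ = (1/√m) Σ_i γ_i`. If some amplitude
satisfies `|γ_k|² < 1/(2m)`, then measuring `ξ` with `{u_m u_m*, I − u_m u_m*}`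
yields the second outcome with probability
`1 − |⟨u_m, ξ⟩|² ≥ 1/(16 m²)`. -/
theorem far_from_uniform (m : ℕ) (hm : 1 ≤ m) (γ : Fin m → ℂ)
    (hγ : ∑ i, ‖γ i‖ ^ 2 = 1)
    (hk : ∃ k : Fin m, ‖γ k‖ ^ 2 < 1 / (2 * (m : ℝ))) :
    1 - ‖((Real.sqrt m : ℂ))⁻¹ * ∑ i, γ i‖ ^ 2
      ≥ 1 / (16 * (m : ℝ) ^ 2) :=
  far_from_uniform_general m γ hγ hk
end

section
/- Let m ≥ 1, let G be a simple graph on the vertex set {0, …, m−1}, and let c : {0,…,m−1} → {0,1,2} be a proper 3-coloring of G (c(u) ≠ c(v) for every edge {u,v}). Define the unit vector φ_c = (1/√m) Σ_{i<m} e_i ⊗ f_{c(i)} ∈ ℂ^m ⊗ ℂ³. Then, taking both proof registers equal to φ_c (i.e. ψ = φ = φ_c with amplitudes α_i = α'_i = 1/√m and β_{i,j} = β'_{i,j} = [j = c(i)]), all rejection probabilities vanish: R_eq = 1 − ½(1 + |⟨φ_c, φ_c⟩|²) = 0, R_sv = 0, R_edge(G) = 0, and R_unif(φ_c) = ‖((I_m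 − u_m u_m*) ⊗ u₃u₃*) φ_c‖² = 0. Hence the verifier accepts with probability 1. -/
/-! With `φ_c` as proof, every measurement outcome the tests reject has amplitude zero: a vertex
carries only its own colour, so two distinct colours at one vertex, or one colour at two adjacent
(hence differently coloured) vertices, never occur; `φ_c` is a unit vector, so the SWAP test
passes; and summing out the colour register of `φ_c` leaves exactly `u_m`, which the uniformity
projector annihilates. -/

open Finset ComplexConjugate

lemma norm_sq_mul_norm_sq_mul_eq_zero {a b a' b' : ℂ} (h : b = 0 ∨ b' = 0) :
    ‖a‖ ^ 2 * ‖b‖ ^ 2 * ‖a'‖ ^ 2 * ‖b'‖ ^ 2 = 0 := by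
  rcases h with rfl | rfl <;> simp

lemma norm_inv_sqrt_natCast_sq (m : ℕ) : ‖((Real.sqrt m : ℂ))⁻¹‖ ^ 2 = (m : ℝ)⁻¹ := by
  rw [norm_inv, inv_pow, Complex.norm_real, Real.norm_eq_abs, sq_abs,
    Real.sq_sqrt (Nat.cast_nonneg m)]

section OneHot

variable {m n : ℕ} {c : Fin m → Fin n} {β : Fin m → Fin n → ℂ}

lemma sum_oneHot (hβ : ∀ i j, β i j = if j = c i then 1 else 0) (i : Fin m) :
    ∑ j, β i j = 1 := by
  simp [hβ]

lemma oneHot_eq_zero_or (hβ : ∀ i j, β i j = if j = c i then 1 else 0) {i i' : Fin m}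
    {j j' : Fin n} (h : ¬(j = c i ∧ j' = c i')) : β i j = 0 ∨ β i' j' = 0 := by
  rw [hβ, hβ]
  by_cases hj : j = c i <;> simp_all

lemma sum_norm_oneHot_sq (hβ : ∀ i j, β i j = if j = c i then 1 else 0) (i : Fin m) :
    ∑ j, ‖β i j‖ ^ 2 = 1 := by
  simp [hβ, apply_ite]

end OneHot

lemma sum_conj_mul_self_eq_one {m n : ℕ} (hm : m ≠ 0) {c : Fin m → Fin n} {α : Fin m → ℂ}
    {β : Fin m → Fin n → ℂ} (hα : ∀ i, α i = ((Real.sqrt m : ℂ))⁻¹)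
    (hβ : ∀ i j, β i j = if j = c i then 1 else 0) :
    ∑ i, ∑ j, conj (α i * β i j) * (α i * β i j) = 1 := by
  have hterm : ∀ i, ∑ j, ‖α i * β i j‖ ^ 2 = (m : ℝ)⁻¹ := fun i => by
    simp only [norm_mul, mul_pow, ← mul_sum, sum_norm_oneHot_sq hβ, hα,
      norm_inv_sqrt_natCast_sq, mul_one]
  calc ∑ i, ∑ j, conj (α i * β i j) * (α i * β i j)
      = ((∑ i, ∑ j, ‖α i * β i j‖ ^ 2 : ℝ) : ℂ) := by push_cast; simp only [Complex.conj_mul']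
    _ = 1 := by
      rw [sum_congr rfl fun i _ => hterm i, sum_const, card_univ, Fintype.card_fin, nsmul_eq_mul,
        mul_inv_cancel₀ (Nat.cast_ne_zero.2 hm), Complex.ofReal_one]

lemma marginal_sub_uniform_eq_zero {m n : ℕ} (hm : m ≠ 0) {a : ℂ} {α : Fin m → ℂ}
    {β : Fin m → Fin n → ℂ} (hα : ∀ i, α i = a) (hβ : ∀ i, ∑ j, β i j = 1) :
    (fun q : Fin m × Fin n => (1 / 3 : ℂ) * (α q.1 * ∑ j', β q.1 j')
      - (1 / (3 * (m : ℂ))) * ∑ i', (α i' * ∑ j', β i' j')) = 0 := by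
  funext q
  simp only [hβ, hα, mul_one, sum_const, card_univ, Fintype.card_fin, nsmul_eq_mul,
    Pi.zero_apply]
  field_simp
  ring

/-- **Completeness of the Blier–Tapp verifier.**
If `c` is a proper 3-coloring of the simple graph `G` on `{0, …, m−1}` and
both proof registers are `φ_c = (1/√m) Σ_i e_i ⊗ f_{c(i)}` (amplitudes
`α_i = 1/√m`, `β_{i,j} = [j = c i]`), then all rejection probabilities vanish:
`R_eq = 0`, `R_sv = 0`, `R_edge(G) = 0`, and `R_unif(φ_c) = 0`; hence the
verifier accepts with probability `1`. -/
theorem blier_tapp_completeness (m : ℕ) (hm : 1 ≤ m)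
    (G : SimpleGraph (Fin m)) [DecidableRel G.Adj]
    (c : Fin m → Fin 3) (hc : ∀ u v, G.Adj u v → c u ≠ c v)
    (α : Fin m → ℂ) (β : Fin m → Fin 3 → ℂ)
    (hαdef : ∀ i, α i = ((Real.sqrt m : ℂ))⁻¹)
    (hβdef : ∀ i j, β i j = if j = c i then 1 else 0) :
    (1 - (1 / 2 : ℝ) * (1 + ‖∑ i, ∑ j, (starRingEnd ℂ) (α i * β i j) * (α i * β i j)‖ ^ 2) = 0)
    ∧ (∑ i, ∑ j, ∑ j', (if j = j' then 0 else
        ‖α i‖ ^ 2 * ‖β i j‖ ^ 2 *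
          ‖α i‖ ^ 2 * ‖β i j'‖ ^ 2) = 0)
    ∧ (∑ u, ∑ v, (if G.Adj u v ∧ u < v then ∑ j : Fin 3,
        (‖α u‖ ^ 2 * ‖β u j‖ ^ 2 *
            ‖α v‖ ^ 2 * ‖β v j‖ ^ 2
          + ‖α v‖ ^ 2 * ‖β v j‖ ^ 2 *
            ‖α u‖ ^ 2 * ‖β u j‖ ^ 2) else 0) = 0)
    ∧ ‖toEuc (fun q : Fin m × Fin 3 =>
          (1 / 3 : ℂ) * (α q.1 * ∑ j', β q.1 j')
            - (1 / (3 * (m : ℂ))) * ∑ i', (α i' * ∑ j', β i' j'))‖ ^ 2 = 0 := by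
  have hm0 : m ≠ 0 := by omega
  have hcolor_ne : ∀ {u v}, c u ≠ c v → ∀ j, β u j = 0 ∨ β v j = 0 :=
    fun huv _ => oneHot_eq_zero_or hβdef fun ⟨hu, hv⟩ => huv (hu.symm.trans hv)
  refine ⟨?_, ?_, ?_, ?_⟩
  · rw [sum_conj_mul_self_eq_one hm0 hαdef hβdef]
    norm_num
  · refine sum_eq_zero fun i _ => sum_eq_zero fun j _ => sum_eq_zero fun j' _ => ?_
    split_ifs with hjj'
    · rfl
    · exact norm_sq_mul_norm_sq_mul_eq_zero <|
        oneHot_eq_zero_or hβdef fun ⟨hj, hj'⟩ => hjj' (hj.trans hj'.symm)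
  · refine sum_eq_zero fun u _ => sum_eq_zero fun v _ => ?_
    split_ifs with huv
    · refine sum_eq_zero fun j _ => ?_
      rw [norm_sq_mul_norm_sq_mul_eq_zero (hcolor_ne (hc u v huv.1) j),
        norm_sq_mul_norm_sq_mul_eq_zero (hcolor_ne (hc v u huv.1.symm) j), add_zero]
    · rfl
  · rw [marginal_sub_uniform_eq_zero hm0 hαdef (sum_oneHot hβdef), toEuc, WithLp.toLp_zero,
      norm_zero, sq, zero_mul]
end
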